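/- With the notation below, for all integers p, q ≥ 1 and r ≥ 0, the multihomogeneous component of U f₃ / I₅ of degree p in x, q in y and r in z has dimension Σ_{r₁ + r₂ = r} C(q−1+r₁, r₁) · C(p−1+r₂, r₂), where C(·,·) denotes the binomial coefficient. Equivalently, the Poincaré series of the bidegree-≥(1,1) part of U f₃ / I₅ is s₁s₂ / ((1−s₁−t)(1−s₂−t)), where s₁, s₂, t track the degrees in x, y, z. -/

import Mathlib

/-- The free Lie algebra over `ℂ` on three generators `x`, `y`, `z`. -/
abbrev f3 : Type := FreeLieAlgebra ℂ (Fin 3)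

noncomputable def x : f3 := FreeLieAlgebra.of ℂ 0
noncomputable def y : f3 := FreeLieAlgebra.of ℂ 1
noncomputable def z : f3 := FreeLieAlgebra.of ℂ 2

abbrev Uf3 : Type := UniversalEnvelopingAlgebra ℂ f3

attribute [local instance 100] LieRing.ofAssociativeRing

noncomputable def ι : f3 →ₗ⁅ℂ⁆ Uf3 := UniversalEnvelopingAlgebra.ι ℂ

/-- The monomial in `U f₃` given by a word in the letters `x, y, z`. -/
noncomputable def monomial (l : List (Fin 3)) : Uf3 :=
  (l.map fun i => ι (FreeLieAlgebra.of ℂ i)).prod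

/-- The two-sided ideal of `U f₃` generated by `ι w`, as a `ℂ`-subspace. -/
noncomputable def twoSided (w : f3) : Submodule ℂ Uf3 :=
  Submodule.span ℂ {u : Uf3 | ∃ a b : Uf3, u = a * ι w * b}

/-- The left ideal `I₅ := (x)(y) + (U f₃)·z`. -/
noncomputable def I5 : Submodule ℂ Uf3 :=
  twoSided x * twoSided y + Submodule.span ℂ {u : Uf3 | ∃ a : Uf3, u = a * ι z}

/-- The multihomogeneous component of `U f₃` of degree `p` in `x`, `q` in `y`, `r` in `z`:
the span of the monomials with exactly `p` occurrences of `x`, `q` of `y` and `r` of `z`. -/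
noncomputable def H (p q r : ℕ) : Submodule ℂ Uf3 :=
  Submodule.span ℂ
    {u : Uf3 | ∃ l : List (Fin 3),
      l.count 0 = p ∧ l.count 1 = q ∧ l.count 2 = r ∧ u = monomial l}

/-!
`U f₃` is the free associative algebra `ℂ⟨x, y, z⟩`, i.e. the monoid algebra of the free monoid
on `x, y, z`, and in it `I₅` is the span of the words that contain an `x` somewhere before a `y`
or end in `z`. So the component of `U f₃ / I₅` of degree `(p, q, r)` has as a basis the
remaining words of that degree. Such a word, if it contains both `x` and `y`, has all its `y`s
before all its `x`s and ends in `x`; cutting it at its last `y` writes it uniquely as `u y v x`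
with `u` a word in `y, z` and `v` a word in `x, z`. Distributing the `r` letters `z` between
`u` and `v` gives the binomial sum.
-/

open Module Submodule
open scoped Pointwise List

section Quotient
variable {K V W ι : Type*} [DivisionRing K] [AddCommGroup V] [Module K V] [AddCommGroup W]
  [Module K W]

theorem finrank_map_mkQ_eq_of_linearEquiv (e : V ≃ₗ[K] W) (N I : Submodule K V) :
    finrank K (N.map I.mkQ) =
      finrank K ((N.map (e : V →ₗ[K] W)).map (I.map (e : V →ₗ[K] W)).mkQ) := by
  let q : (V ⧸ I) ≃ₗ[K] W ⧸ I.map (e : V →ₗ[K] W) := Submodule.Quotient.equiv I _ e rfl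
  have hq : (I.map (e : V →ₗ[K] W)).mkQ ∘ₗ (e : V →ₗ[K] W) = q ∘ₗ I.mkQ := rfl
  rw [← q.finrank_map_eq, ← map_comp, ← hq, map_comp]

theorem finrank_map_mkQ_of_disjoint {N I : Submodule K V} (h : Disjoint N I) :
    finrank K (N.map I.mkQ) = finrank K N := by
  rw [← LinearMap.range_domRestrict, LinearMap.finrank_range_of_inj]
  rwa [LinearMap.injective_domRestrict_iff, ker_mkQ]

theorem map_mkQ_sup_self (N I : Submodule K V) : (N ⊔ I).map I.mkQ = N.map I.mkQ := by
  rw [Submodule.map_sup, mkQ_map_self, sup_bot_eq]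

theorem LinearIndependent.finrank_span_image {v : ι → V} (hv : LinearIndependent K v)
    (s : Set ι) : finrank K (span K (v '' s)) = Nat.card s := by
  have hvs : LinearIndependent K fun x : s ↦ v x := hv.comp _ Subtype.val_injective
  rw [Set.image_eq_range, finrank, rank_span hvs]
  exact Nat.card_range_of_injective hvs.injective

theorem LinearIndependent.finrank_map_mkQ_span_image {v : ι → V} (hv : LinearIndependent K v)
    (s t : Set ι) :
    finrank K ((span K (v '' s)).map (span K (v '' t)).mkQ) = Nat.card ↥(s \ t) := by
  have hmap : (span K (v '' s)).map (span K (v '' t)).mkQ =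
      (span K (v '' (s \ t))).map (span K (v '' t)).mkQ := by
    rw [← map_mkQ_sup_self, ← map_mkQ_sup_self (span K (v '' (s \ t))), ← span_union,
      ← span_union, ← Set.image_union, ← Set.image_union, Set.sdiff_union_self]
  rw [hmap, finrank_map_mkQ_of_disjoint (hv.disjoint_span_image Set.disjoint_sdiff_left),
    hv.finrank_span_image]

end Quotient

section Algebra
variable {R A B : Type*} [CommSemiring R] [Semiring A] [Algebra R A] [Semiring B] [Algebra R B]

theorem span_setOf_mul_mul_eq (c : A) :
    span R {u | ∃ a b, u = a * c * b} = ⊤ * span R {c} * ⊤ := by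
  rw [← span_univ, span_mul_span, span_mul_span]
  congr 1
  ext u
  simp [Set.mem_mul, eq_comm]

theorem span_setOf_mul_eq (c : A) : span R {u | ∃ a, u = a * c} = ⊤ * span R {c} := by
  rw [← span_univ, span_mul_span]
  congr 1
  ext u
  simp [eq_comm]

namespace AlgEquiv
variable (e : A ≃ₐ[R] B)

theorem map_toLinearMap_top : (⊤ : Submodule R A).map e.toLinearMap = ⊤ := by
  rw [Submodule.map_top, LinearMap.range_eq_top]
  exact e.surjective

theorem map_toLinearMap_mul (M N : Submodule R A) :
    (M * N).map e.toLinearMap = M.map e.toLinearMap * N.map e.toLinearMap :=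
  Submodule.map_mul M N e.toAlgHom

theorem map_toLinearMap_span_singleton (c : A) :
    (span R {c}).map e.toLinearMap = span R {e c} := by
  rw [map_span, Set.image_singleton]
  rfl

end AlgEquiv

end Algebra

namespace MonoidAlgebra
variable {k M : Type*} [CommSemiring k] [Monoid M]

theorem linearIndependent_of : LinearIndependent k (of k M) :=
  (basis M k).linearIndependent

theorem span_of_image_univ : span k (of k M '' Set.univ) = ⊤ := by
  rw [Set.image_univ]
  exact (basis M k).span_eq

theorem span_of_image_mul (s t : Set M) :
    span k (of k M '' s) * span k (of k M '' t) = span k (of k M '' (s * t)) := by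
  rw [span_mul_span, Set.image_mul]

theorem top_mul_span_singleton_of (m : M) :
    ⊤ * span k {of k M m} = span k (of k M '' (Set.univ * {m})) := by
  rw [← span_of_image_univ, ← Set.image_singleton, span_of_image_mul]

theorem top_mul_span_singleton_of_mul_top (m : M) :
    ⊤ * span k {of k M m} * ⊤ = span k (of k M '' (Set.univ * {m} * Set.univ)) := by
  rw [top_mul_span_singleton_of, ← span_of_image_univ, span_of_image_mul]

end MonoidAlgebra

namespace List
variable {α : Type*}

theorem pair_sublist_iff {a b : α} {l : List α} :
    [a, b] <+ l ↔ ∃ l₁ l₂, l = l₁ ++ l₂ ∧ a ∈ l₁ ∧ b ∈ l₂ := by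
  rw [cons_sublist_iff]
  simp only [singleton_sublist]

theorem not_pair_sublist_append {a b : α} {s t : List α} (ha : a ∉ s) (hb : b ∉ t) :
    ¬ [a, b] <+ s ++ t := by
  rw [sublist_append_iff]
  rintro ⟨_ | ⟨c, l₁⟩, l₂, h, h₁, h₂⟩
  · rw [nil_append] at h
    exact hb (h₂.subset (by simp [← h]))
  · obtain ⟨rfl, -⟩ := cons_eq_cons.1 h
    exact ha (h₁.subset mem_cons_self)

theorem append_cons_inj_of_notMem_right {x₁ x₂ z₁ z₂ : List α} {a : α} (h₁ : a ∉ z₁)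
    (h₂ : a ∉ z₂) : x₁ ++ a :: z₁ = x₂ ++ a :: z₂ ↔ x₁ = x₂ ∧ z₁ = z₂ := by
  constructor
  · intro h
    rcases append_eq_append_iff.1 h with ⟨c, rfl, hc⟩ | ⟨c, rfl, hc⟩ <;>
      rcases cons_eq_append_iff.1 hc with ⟨rfl, hz⟩ | ⟨d, rfl, hz⟩ <;> simp_all
  · rintro ⟨rfl, rfl⟩
    rfl

theorem eq_append_cons_of_mem_of_notMem_right {a : α} {l : List α} (h : a ∈ l) :
    ∃ s t, l = s ++ a :: t ∧ a ∉ t := by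
  obtain ⟨s, t, hl, ht⟩ := eq_append_cons_of_mem (mem_reverse.2 h)
  exact ⟨t.reverse, s.reverse, by simpa using congrArg reverse hl, by simpa using ht⟩

end List

namespace FreeMonoid
variable {α : Type*}

theorem univ_mul_singleton_of_mul_univ (a : α) :
    Set.univ * {of a} * Set.univ = {w : FreeMonoid α | a ∈ w.toList} := by
  ext w
  simp only [Set.mem_mul, Set.mem_univ, Set.mem_singleton_iff, true_and, exists_eq_left,
    Set.mem_ofPred_eq, List.mem_iff_append]
  constructor
  · rintro ⟨_, ⟨s, rfl⟩, t, rfl⟩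
    exact ⟨s.toList, t.toList, by simp [toList_mul, toList_of]⟩
  · rintro ⟨s, t, h⟩
    refine ⟨_, ⟨ofList s, rfl⟩, ofList t, ?_⟩
    rw [← ofList_toList w, h, ofList_append, ofList_cons, mul_assoc]

theorem setOf_mem_mul_setOf_mem (a b : α) :
    {w : FreeMonoid α | a ∈ w.toList} * {w | b ∈ w.toList} = {w | [a, b] <+ w.toList} := by
  ext w
  simp only [Set.mem_mul, Set.mem_ofPred_eq, List.pair_sublist_iff]
  constructor
  · rintro ⟨s, hs, t, ht, rfl⟩
    exact ⟨s.toList, t.toList, rfl, hs, ht⟩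
  · rintro ⟨s, t, h, hs, ht⟩
    exact ⟨ofList s, hs, ofList t, ht, by rw [← ofList_toList w, h]; rfl⟩

theorem univ_mul_singleton_of (a : α) :
    Set.univ * {of a} = {w : FreeMonoid α | w.toList.getLast? = some a} := by
  ext w
  simp only [Set.mem_mul, Set.mem_univ, Set.mem_singleton_iff, true_and, exists_eq_left,
    Set.mem_ofPred_eq, List.getLast?_eq_some_iff]
  constructor
  · rintro ⟨s, rfl⟩
    exact ⟨s.toList, rfl⟩
  · rintro ⟨s, h⟩
    exact ⟨ofList s, by rw [← ofList_toList w, h]; rfl⟩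

end FreeMonoid

namespace FreeLieAlgebra
variable (R X : Type*) [CommRing R]

noncomputable def universalEnvelopingEquivMonoidAlgebra :
    UniversalEnvelopingAlgebra R (FreeLieAlgebra R X) ≃ₐ[R] MonoidAlgebra R (FreeMonoid X) :=
  (universalEnvelopingEquivFreeAlgebra R X).trans FreeAlgebra.equivMonoidAlgebraFreeMonoid

variable {R X}

theorem universalEnvelopingEquivMonoidAlgebra_ι_of (x : X) :
    universalEnvelopingEquivMonoidAlgebra R X (UniversalEnvelopingAlgebra.ι R (of R x)) =
      MonoidAlgebra.of R (FreeMonoid X) (FreeMonoid.of x) := by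
  simp [universalEnvelopingEquivMonoidAlgebra, FreeAlgebra.equivMonoidAlgebraFreeMonoid]

end FreeLieAlgebra

section NormalWords
open Finset

def boolWords : ℕ → ℕ → Finset (List Bool)
  | 0, 0 => {[]}
  | a + 1, 0 => (boolWords a 0).image (false :: ·)
  | 0, b + 1 => (boolWords 0 b).image (true :: ·)
  | a + 1, b + 1 =>
    (boolWords a (b + 1)).image (false :: ·) ∪ (boolWords (a + 1) b).image (true :: ·)

theorem mem_boolWords {l : List Bool} {a b : ℕ} :
    l ∈ boolWords a b ↔ l.count false = a ∧ l.count true = b := by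
  induction l generalizing a b with
  | nil => cases a <;> cases b <;> simp [boolWords]
  | cons c l ih => cases a <;> cases b <;> cases c <;> simp [boolWords, ih]

theorem card_boolWords (a b : ℕ) : #(boolWords a b) = (a + b).choose b := by
  induction a, b using boolWords.induct with
  | case1 => simp [boolWords]
  | case2 a ih | case3 a ih => simp [boolWords, card_image_of_injective _ List.cons_injective, ih]
  | case4 a b ih₁ ih₂ =>
    rw [boolWords, card_union_of_disjoint, card_image_of_injective _ List.cons_injective,
      card_image_of_injective _ List.cons_injective, ih₁, ih₂]
    · rw [show a + 1 + (b + 1) = a + 1 + b + 1 by omega, Nat.choose_succ_succ,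
        show a + (b + 1) = a + 1 + b by omega, add_comm]
    · simp [disjoint_left]

def orZ (i : Fin 3) (c : Bool) : Fin 3 := bif c then 2 else i

def normalWord (u v : List Bool) : List (Fin 3) := u.map (orZ 1) ++ 1 :: (v.map (orZ 0) ++ [0])

theorem one_notMem_map_orZ_zero (v : List Bool) : 1 ∉ v.map (orZ 0) := by
  simp [orZ]

theorem zero_notMem_map_orZ_one (u : List Bool) : 0 ∉ u.map (orZ 1) := by
  simp [orZ]

theorem orZ_injective {i : Fin 3} (hi : i ≠ 2) : Function.Injective (orZ i) := by
  intro c d h; cases c <;> cases d <;> simp_all [orZ, eq_comm]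

theorem normalWord_injective :
    Function.Injective fun uv : List Bool × List Bool ↦ normalWord uv.1 uv.2 := by
  rintro ⟨u, v⟩ ⟨u', v'⟩ h
  dsimp only at h
  obtain ⟨hu, hv⟩ :=
    (List.append_cons_inj_of_notMem_right (by simp [orZ]) (by simp [orZ])).1 h
  rw [List.append_cancel_right_eq] at hv
  rw [(List.map_injective_iff.2 (orZ_injective (by decide))) hu,
    (List.map_injective_iff.2 (orZ_injective (by decide))) hv]

theorem count_map_orZ_self {i : Fin 3} (hi : i ≠ 2) (u : List Bool) :
    (u.map (orZ i)).count i = u.count false :=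
  List.count_map_of_injective u _ (orZ_injective hi) false

theorem count_map_orZ_two {i : Fin 3} (hi : i ≠ 2) (u : List Bool) :
    (u.map (orZ i)).count 2 = u.count true :=
  List.count_map_of_injective u _ (orZ_injective hi) true

theorem count_normalWord (u v : List Bool) :
    (normalWord u v).count 0 = v.count false + 1 ∧ (normalWord u v).count 1 = u.count false + 1 ∧
      (normalWord u v).count 2 = u.count true + v.count true := by
  simp [normalWord, count_map_orZ_self, count_map_orZ_two,
    List.count_eq_zero.2 (zero_notMem_map_orZ_one u),
    List.count_eq_zero.2 (one_notMem_map_orZ_zero v)]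

theorem not_sublist_normalWord (u v : List Bool) : ¬ [0, 1] <+ normalWord u v := by
  have : normalWord u v = (u.map (orZ 1) ++ [1]) ++ (v.map (orZ 0) ++ [0]) := by simp [normalWord]
  rw [this]
  exact List.not_pair_sublist_append (by simp [orZ]) (by simp [orZ])

theorem getLast?_normalWord (u v : List Bool) : (normalWord u v).getLast? = some 0 := by
  simp [normalWord, List.getLast?_append, List.getLast?_cons]

theorem map_orZ_map_beq_two (i : Fin 3) {l : List (Fin 3)} (h : ∀ a ∈ l, a = i ∨ a = 2) :
    (l.map (· == 2)).map (orZ i) = l := by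
  rw [List.map_map]
  conv_rhs => rw [← List.map_id l]
  refine List.map_congr_left fun a ha => ?_
  rcases h a ha with rfl | rfl
  · by_cases ha2 : a = 2
    · simp [orZ, ha2]
    · simp [orZ, beq_false_of_ne ha2]
  · rfl

theorem exists_eq_normalWord {l : List (Fin 3)} (h01 : ¬ [0, 1] <+ l) (hlast : l.getLast? ≠ some 2)
    (h0 : 0 ∈ l) (h1 : 1 ∈ l) : ∃ u v, l = normalWord u v := by
  obtain ⟨A, B, rfl, hB⟩ := List.eq_append_cons_of_mem_of_notMem_right h1
  have hA : 0 ∉ A := fun h ↦ h01 (List.pair_sublist_iff.2 ⟨A, 1 :: B, rfl, h, List.mem_cons_self⟩)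
  rcases List.eq_nil_or_concat B with rfl | ⟨C, c, rfl⟩
  · simp [hA] at h0
  have hc : c = 0 := by
    have hc1 : c ≠ 1 := by rintro rfl; simp at hB
    have hc2 : c ≠ 2 := by rintro rfl; simp [List.getLast?_append, List.getLast?_cons] at hlast
    omega
  subst hc
  refine ⟨A.map (· == 2), C.map (· == 2), ?_⟩
  rw [normalWord, map_orZ_map_beq_two 1 fun a ha ↦ ?_, map_orZ_map_beq_two 0 fun a ha ↦ ?_]
  · simp
  · have : a ≠ 1 := ne_of_mem_of_not_mem ha (by simpa using hB)
    omega
  · have := ne_of_mem_of_not_mem ha hA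
    omega

def normalWords (p q r : ℕ) : Set (List (Fin 3)) :=
  {l | l.count 0 = p ∧ l.count 1 = q ∧ l.count 2 = r ∧ ¬ [0, 1] <+ l ∧ l.getLast? ≠ some 2}

def wordPairs (p q r : ℕ) : Finset (List Bool × List Bool) :=
  (antidiagonal r).biUnion fun ab ↦ boolWords (q - 1) ab.1 ×ˢ boolWords (p - 1) ab.2

theorem mem_wordPairs {p q r : ℕ} {uv : List Bool × List Bool} :
    uv ∈ wordPairs p q r ↔ uv.1.count true + uv.2.count true = r ∧
      uv.1.count false = q - 1 ∧ uv.2.count false = p - 1 := by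
  simp [wordPairs, mem_boolWords]

theorem card_wordPairs (p q r : ℕ) : #(wordPairs p q r) =
    ∑ ab ∈ antidiagonal r, (q - 1 + ab.1).choose ab.1 * (p - 1 + ab.2).choose ab.2 := by
  rw [wordPairs, card_biUnion]
  · simp [card_boolWords]
  · intro ab _ ab' _ hne
    refine disjoint_left.2 fun uv h h' ↦ hne ?_
    simp only [mem_product, mem_boolWords] at h h'
    exact Prod.ext (h.1.2.symm.trans h'.1.2) (h.2.2.symm.trans h'.2.2)

theorem normalWords_eq_image {p q r : ℕ} (hp : 1 ≤ p) (hq : 1 ≤ q) :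
    normalWords p q r =
      (fun uv : List Bool × List Bool ↦ normalWord uv.1 uv.2) '' (wordPairs p q r : Set _) := by
  ext l
  simp only [normalWords, Set.mem_ofPred_eq, Set.mem_image, mem_coe, mem_wordPairs]
  constructor
  · rintro ⟨h0, h1, h2, h01, hlast⟩
    obtain ⟨u, v, rfl⟩ := exists_eq_normalWord h01 hlast (List.count_pos_iff.1 (by omega))
      (List.count_pos_iff.1 (by omega))
    obtain ⟨c0, c1, c2⟩ := count_normalWord u v
    refine ⟨(u, v), ⟨?_, ?_, ?_⟩, rfl⟩ <;> dsimp only <;> omega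
  · rintro ⟨⟨u, v⟩, ⟨huv, hu, hv⟩, rfl⟩
    dsimp only at *
    obtain ⟨c0, c1, c2⟩ := count_normalWord u v
    exact ⟨by omega, by omega, by omega, not_sublist_normalWord u v, by simp [getLast?_normalWord]⟩

theorem natCard_normalWords {p q r : ℕ} (hp : 1 ≤ p) (hq : 1 ≤ q) : Nat.card (normalWords p q r) =
    ∑ ab ∈ antidiagonal r, (q - 1 + ab.1).choose ab.1 * (p - 1 + ab.2).choose ab.2 := by
  rw [normalWords_eq_image hp hq, Nat.card_image_of_injective normalWord_injective,
    Nat.card_coe_set_eq, Set.ncard_coe_finset, card_wordPairs]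

end NormalWords

local notation "φ" => FreeLieAlgebra.universalEnvelopingEquivMonoidAlgebra ℂ (Fin 3)

theorem universalEnvelopingEquivMonoidAlgebra_monomial (l : List (Fin 3)) :
    φ (monomial l) = MonoidAlgebra.of ℂ _ (FreeMonoid.ofList l) := by
  induction l with
  | nil => rw [monomial, List.map_nil, List.prod_nil, map_one, FreeMonoid.ofList_nil, map_one]
  | cons i l ih =>
    rw [monomial, List.map_cons, List.prod_cons, map_mul, ← monomial, ih, FreeMonoid.ofList_cons,
      map_mul, ι, FreeLieAlgebra.universalEnvelopingEquivMonoidAlgebra_ι_of]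

open MonoidAlgebra in
theorem map_H_eq_span (p q r : ℕ) :
    (H p q r).map (φ).toLinearMap = span ℂ (of ℂ _ '' {w : FreeMonoid (Fin 3) |
      w.toList.count 0 = p ∧ w.toList.count 1 = q ∧ w.toList.count 2 = r}) := by
  rw [H, map_span]
  congr 1
  ext u
  simp only [Set.mem_image, Set.mem_ofPred_eq]
  constructor
  · rintro ⟨_, ⟨l, hl0, hl1, hl2, rfl⟩, rfl⟩
    exact ⟨FreeMonoid.ofList l, ⟨hl0, hl1, hl2⟩,
      (universalEnvelopingEquivMonoidAlgebra_monomial l).symm⟩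
  · rintro ⟨w, ⟨hw0, hw1, hw2⟩, rfl⟩
    exact ⟨monomial w.toList, ⟨w.toList, hw0, hw1, hw2, rfl⟩,
      universalEnvelopingEquivMonoidAlgebra_monomial _⟩

open MonoidAlgebra in
theorem map_I5_eq_span : I5.map (φ).toLinearMap = span ℂ (of ℂ _ ''
    {w : FreeMonoid (Fin 3) | [0, 1] <+ w.toList ∨ w.toList.getLast? = some 2}) := by
  rw [I5, twoSided, twoSided, span_setOf_mul_mul_eq, span_setOf_mul_mul_eq, span_setOf_mul_eq,
    Submodule.add_eq_sup, Submodule.map_sup]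
  simp only [AlgEquiv.map_toLinearMap_mul, AlgEquiv.map_toLinearMap_top,
    AlgEquiv.map_toLinearMap_span_singleton, ι, x, y, z,
    FreeLieAlgebra.universalEnvelopingEquivMonoidAlgebra_ι_of]
  rw [top_mul_span_singleton_of_mul_top, top_mul_span_singleton_of_mul_top,
    top_mul_span_singleton_of, span_of_image_mul, ← span_union, ← Set.image_union,
    FreeMonoid.univ_mul_singleton_of_mul_univ, FreeMonoid.univ_mul_singleton_of_mul_univ,
    FreeMonoid.setOf_mem_mul_setOf_mem, FreeMonoid.univ_mul_singleton_of, Set.ofPred_or]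

theorem toList_preimage_normalWords (p q r : ℕ) :
    FreeMonoid.toList ⁻¹' normalWords p q r =
      {w : FreeMonoid (Fin 3) | w.toList.count 0 = p ∧ w.toList.count 1 = q ∧
        w.toList.count 2 = r} \ {w | [0, 1] <+ w.toList ∨ w.toList.getLast? = some 2} := by
  ext w
  simp [normalWords, and_assoc]

theorem dimension_of_components (p q r : ℕ) (hp : 1 ≤ p) (hq : 1 ≤ q) :
    Module.finrank ℂ ((H p q r).map I5.mkQ) =
      ∑ ab ∈ Finset.HasAntidiagonal.antidiagonal r,
        Nat.choose (q - 1 + ab.1) ab.1 * Nat.choose (p - 1 + ab.2) ab.2 := by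
  rw [finrank_map_mkQ_eq_of_linearEquiv (φ).toLinearEquiv, AlgEquiv.toLinearEquiv_toLinearMap,
    map_H_eq_span, map_I5_eq_span, MonoidAlgebra.linearIndependent_of.finrank_map_mkQ_span_image,
    ← toList_preimage_normalWords, Nat.card_preimage_of_injective FreeMonoid.toList.injective
      (by simp), natCard_normalWords hp hq]
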